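/- Let N ≥ 1, let u : ℝ × ℝ → ℝ and U : ℝ × ℝ → ℝ^N be smooth solutions of u_t = u_{xxx} + u_x² - 12⟨U,U_{xx}⟩ + 12⟨U_x,U_x⟩ - 4⟨U,U⟩² and U_t = 4U_{xxx} + u_{xx}U + 2u_x U_x + 4⟨U,U⟩U_x + 4⟨U,U_x⟩U. Then w := u_x + 2⟨U,U⟩ satisfies the KdV equation w_t = w_{xxx} + 2 w w_x, and U satisfies U_t = 4U_{xxx} + w_x U + 2 w U_x. -/

import Mathlib

noncomputable section

/-- partial derivative in the first (space) variable -/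
def pdx (f : ℝ → ℝ → ℝ) : ℝ → ℝ → ℝ := fun x t => deriv (fun y => f y t) x

/-- partial derivative in the second (time) variable -/
def pdt (f : ℝ → ℝ → ℝ) : ℝ → ℝ → ℝ := fun x t => deriv (fun s => f x s) t

/-- smoothness of a function of two real variables -/
def smooth2 (f : ℝ → ℝ → ℝ) : Prop := ContDiff ℝ (⊤ : ℕ∞) (fun p : ℝ × ℝ => f p.1 p.2)

/-- componentwise partial x-derivative of a vector-valued function -/
def pdxV {N : ℕ} (U : ℝ → ℝ → Fin N → ℝ) : ℝ → ℝ → Fin N → ℝ :=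
  fun x t i => deriv (fun y => U y t i) x

/-- componentwise partial t-derivative of a vector-valued function -/
def pdtV {N : ℕ} (U : ℝ → ℝ → Fin N → ℝ) : ℝ → ℝ → Fin N → ℝ :=
  fun x t i => deriv (fun s => U x s i) t

/-- pointwise Euclidean inner product of two vector-valued functions -/
def ip {N : ℕ} (A B : ℝ → ℝ → Fin N → ℝ) : ℝ → ℝ → ℝ :=
  fun x t => ∑ i, A x t i * B x t i

/-- componentwise smoothness of a vector-valued function of two real variables -/
def smooth2V {N : ℕ} (U : ℝ → ℝ → Fin N → ℝ) : Prop :=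
  ∀ i, ContDiff ℝ (⊤ : ℕ∞) (fun p : ℝ × ℝ => U p.1 p.2 i)

namespace Stmt4Aux

lemma hasDerivAt_x {f : ℝ → ℝ → ℝ} (hf : smooth2 f) (x t : ℝ) :
    HasDerivAt (fun y => f y t) (fderiv ℝ (fun p : ℝ × ℝ => f p.1 p.2) (x, t) (1, 0)) x := by
  have hF : HasFDerivAt (fun p : ℝ × ℝ => f p.1 p.2)
      (fderiv ℝ (fun p : ℝ × ℝ => f p.1 p.2) (x, t)) (x, t) :=
    (hf.differentiable (by simp) (x, t)).hasFDerivAt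
  have h1 : HasDerivAt (fun y : ℝ => ((y, t) : ℝ × ℝ)) ((1 : ℝ), (0 : ℝ)) x :=
    HasDerivAt.prodMk (hasDerivAt_id x) (hasDerivAt_const x t)
  exact hF.comp_hasDerivAt x h1

lemma hasDerivAt_t {f : ℝ → ℝ → ℝ} (hf : smooth2 f) (x t : ℝ) :
    HasDerivAt (fun s => f x s) (fderiv ℝ (fun p : ℝ × ℝ => f p.1 p.2) (x, t) (0, 1)) t := by
  have hF : HasFDerivAt (fun p : ℝ × ℝ => f p.1 p.2)
      (fderiv ℝ (fun p : ℝ × ℝ => f p.1 p.2) (x, t)) (x, t) :=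
    (hf.differentiable (by simp) (x, t)).hasFDerivAt
  have h1 : HasDerivAt (fun s : ℝ => ((x, s) : ℝ × ℝ)) ((0 : ℝ), (1 : ℝ)) t :=
    HasDerivAt.prodMk (hasDerivAt_const t x) (hasDerivAt_id t)
  exact hF.comp_hasDerivAt t h1

lemma hdx {f : ℝ → ℝ → ℝ} (hf : smooth2 f) (x t : ℝ) :
    HasDerivAt (fun y => f y t) (pdx f x t) x :=
  (hasDerivAt_x hf x t).differentiableAt.hasDerivAt

lemma hdt {f : ℝ → ℝ → ℝ} (hf : smooth2 f) (x t : ℝ) :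
    HasDerivAt (fun s => f x s) (pdt f x t) t :=
  (hasDerivAt_t hf x t).differentiableAt.hasDerivAt

lemma smooth2_pdx {f : ℝ → ℝ → ℝ} (hf : smooth2 f) : smooth2 (pdx f) := by
  have h : (fun p : ℝ × ℝ => pdx f p.1 p.2)
      = fun p : ℝ × ℝ => fderiv ℝ (fun p : ℝ × ℝ => f p.1 p.2) p (1, 0) :=
    funext fun p => (hasDerivAt_x hf p.1 p.2).deriv
  unfold smooth2
  rw [h]
  exact (hf.fderiv_right (by simp)).clm_apply contDiff_const

lemma pdt_pdx_comm {f : ℝ → ℝ → ℝ} (hf : smooth2 f) (x t : ℝ) :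
    pdt (pdx f) x t = pdx (pdt f) x t := by
  set F : ℝ × ℝ → ℝ := fun p => f p.1 p.2 with hFdef
  have hdF : Differentiable ℝ F := hf.differentiable (by simp)
  have hG : ContDiff ℝ (⊤ : ℕ∞) (fderiv ℝ F) := hf.fderiv_right (by simp)
  set H := fderiv ℝ (fderiv ℝ F) (x, t) with hHdef
  have hH : HasFDerivAt (fderiv ℝ F) H (x, t) := (hG.differentiable (by simp) (x, t)).hasFDerivAt
  have hsym := second_derivative_symmetric (fun y => (hdF y).hasFDerivAt) hH
  have key : ∀ v : ℝ × ℝ, HasFDerivAt (fun p : ℝ × ℝ => fderiv ℝ F p v)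
      ((ContinuousLinearMap.apply ℝ ℝ v).comp H) (x, t) := fun v => by
    exact ((ContinuousLinearMap.apply ℝ ℝ v).hasFDerivAt).comp (x, t) hH
  have e1 : pdt (pdx f) x t = H (0, 1) (1, 0) := by
    have hfun : (fun s => pdx f x s) = fun s => fderiv ℝ F (x, s) (1, 0) :=
      funext fun s => (hasDerivAt_x hf x s).deriv
    have h2 : HasDerivAt (fun s : ℝ => ((x, s) : ℝ × ℝ)) ((0 : ℝ), (1 : ℝ)) t :=
      HasDerivAt.prodMk (hasDerivAt_const t x) (hasDerivAt_id t)
    have h3 := (key (1, 0)).comp_hasDerivAt t h2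
    have h4 : HasDerivAt (fun s => fderiv ℝ F (x, s) ((1 : ℝ), (0 : ℝ)))
        (H (0, 1) (1, 0)) t := by
      exact h3
    show deriv (fun s => pdx f x s) t = _
    rw [hfun]
    exact h4.deriv
  have e2 : pdx (pdt f) x t = H (1, 0) (0, 1) := by
    have hfun : (fun y => pdt f y t) = fun y => fderiv ℝ F (y, t) (0, 1) :=
      funext fun y => (hasDerivAt_t hf y t).deriv
    have h2 : HasDerivAt (fun y : ℝ => ((y, t) : ℝ × ℝ)) ((1 : ℝ), (0 : ℝ)) x :=
      HasDerivAt.prodMk (hasDerivAt_id x) (hasDerivAt_const x t)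
    have h3 := (key (0, 1)).comp_hasDerivAt x h2
    have h4 : HasDerivAt (fun y => fderiv ℝ F (y, t) ((0 : ℝ), (1 : ℝ)))
        (H (1, 0) (0, 1)) x := by
      exact h3
    show deriv (fun y => pdt f y t) x = _
    rw [hfun]
    exact h4.deriv
  rw [e1, e2, hsym (0, 1) (1, 0)]

section vec
variable {N : ℕ} {A B : ℝ → ℝ → Fin N → ℝ}

lemma hdxV (hA : smooth2V A) (x t : ℝ) (i : Fin N) :
    HasDerivAt (fun y => A y t i) (pdxV A x t i) x :=
  hdx (f := fun a b => A a b i) (hA i) x t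

lemma hdtV (hA : smooth2V A) (x t : ℝ) (i : Fin N) :
    HasDerivAt (fun s => A x s i) (pdtV A x t i) t :=
  hdt (f := fun a b => A a b i) (hA i) x t

lemma smooth2V_pdxV (hA : smooth2V A) : smooth2V (pdxV A) :=
  fun i => smooth2_pdx (f := fun a b => A a b i) (hA i)

lemma ip_comm (A B : ℝ → ℝ → Fin N → ℝ) : ip A B = ip B A := by
  funext x t
  simp [ip, mul_comm]

lemma hasDerivAt_ip_x (hA : smooth2V A) (hB : smooth2V B) (x t : ℝ) :
    HasDerivAt (fun y => ip A B y t)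
      (ip (pdxV A) B x t + ip A (pdxV B) x t) x := by
  have h : HasDerivAt (fun y => ∑ i, A y t i * B y t i)
      (∑ i, (pdxV A x t i * B x t i + A x t i * pdxV B x t i)) x :=
    HasDerivAt.fun_sum fun i _ => (hdxV hA x t i).mul (hdxV hB x t i)
  simpa [ip, Finset.sum_add_distrib] using h

lemma hasDerivAt_ip_t (hA : smooth2V A) (hB : smooth2V B) (x t : ℝ) :
    HasDerivAt (fun s => ip A B x s)
      (ip (pdtV A) B x t + ip A (pdtV B) x t) t := by
  have h : HasDerivAt (fun s => ∑ i, A x s i * B x s i)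
      (∑ i, (pdtV A x t i * B x t i + A x t i * pdtV B x t i)) t :=
    HasDerivAt.fun_sum fun i _ => (hdtV hA x t i).mul (hdtV hB x t i)
  simpa [ip, Finset.sum_add_distrib] using h

end vec

end Stmt4Aux

open Stmt4Aux

/-- system (4.35) triangularizes to KdV plus a linear vector equation
    under `w = u_x + 2⟨U,U⟩`. -/
theorem stmt_4 {N : ℕ} (hN : 1 ≤ N) (u : ℝ → ℝ → ℝ) (U : ℝ → ℝ → Fin N → ℝ)
    (hu : smooth2 u) (hU : smooth2V U)
    (heq1 : ∀ x t, pdt u x t =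
      pdx (pdx (pdx u)) x t + (pdx u x t) ^ 2 - 12 * ip U (pdxV (pdxV U)) x t
      + 12 * ip (pdxV U) (pdxV U) x t - 4 * (ip U U x t) ^ 2)
    (heq2 : ∀ x t i, pdtV U x t i =
      4 * pdxV (pdxV (pdxV U)) x t i + pdx (pdx u) x t * U x t i
      + 2 * pdx u x t * pdxV U x t i + 4 * ip U U x t * pdxV U x t i
      + 4 * ip U (pdxV U) x t * U x t i)
    (w : ℝ → ℝ → ℝ)
    (hw : ∀ x t, w x t = pdx u x t + 2 * ip U U x t) :
    (∀ x t, pdt w x t = pdx (pdx (pdx w)) x t + 2 * w x t * pdx w x t) ∧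
    (∀ x t i, pdtV U x t i = 4 * pdxV (pdxV (pdxV U)) x t i
      + pdx w x t * U x t i + 2 * w x t * pdxV U x t i) := by
  have hu1 : smooth2 (pdx u) := smooth2_pdx hu
  have hu2 : smooth2 (pdx (pdx u)) := smooth2_pdx hu1
  have hu3 : smooth2 (pdx (pdx (pdx u))) := smooth2_pdx hu2
  have hV1 : smooth2V (pdxV U) := smooth2V_pdxV hU
  have hV2 : smooth2V (pdxV (pdxV U)) := smooth2V_pdxV hV1
  -- first x-derivative of w
  have ha : ∀ x t, pdx w x t = pdx (pdx u) x t + 4 * ip U (pdxV U) x t := by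
    intro x t
    have hfun : (fun y => w y t) = fun y => pdx u y t + 2 * ip U U y t :=
      funext fun y => hw y t
    have h := (hdx hu1 x t).add ((hasDerivAt_ip_x hU hU x t).const_mul 2)
    have h2 : pdx w x t
        = pdx (pdx u) x t + 2 * (ip (pdxV U) U x t + ip U (pdxV U) x t) := by
      show deriv (fun y => w y t) x = _
      rw [hfun]
      exact h.deriv
    rw [h2, ip_comm (pdxV U) U]; ring
  -- second x-derivative of w
  have hb : ∀ x t, pdx (pdx w) x t = pdx (pdx (pdx u)) x t
      + 4 * ip (pdxV U) (pdxV U) x t + 4 * ip U (pdxV (pdxV U)) x t := by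
    intro x t
    have hfun : (fun y => pdx w y t) = fun y => pdx (pdx u) y t + 4 * ip U (pdxV U) y t :=
      funext fun y => ha y t
    have h := (hdx hu2 x t).add ((hasDerivAt_ip_x hU hV1 x t).const_mul 4)
    have h2 : pdx (pdx w) x t = pdx (pdx (pdx u)) x t
        + 4 * (ip (pdxV U) (pdxV U) x t + ip U (pdxV (pdxV U)) x t) := by
      show deriv (fun y => pdx w y t) x = _
      rw [hfun]
      exact h.deriv
    rw [h2]; ring
  refine ⟨?_, ?_⟩
  · intro x t
    -- third x-derivative of w at the point
    have hc : pdx (pdx (pdx w)) x t = pdx (pdx (pdx (pdx u))) x t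
        + 12 * ip (pdxV U) (pdxV (pdxV U)) x t + 4 * ip U (pdxV (pdxV (pdxV U))) x t := by
      have hfun : (fun y => pdx (pdx w) y t) = fun y => pdx (pdx (pdx u)) y t
          + 4 * ip (pdxV U) (pdxV U) y t + 4 * ip U (pdxV (pdxV U)) y t :=
        funext fun y => hb y t
      have h := ((hdx hu3 x t).add ((hasDerivAt_ip_x hV1 hV1 x t).const_mul 4)).add
        ((hasDerivAt_ip_x hU hV2 x t).const_mul 4)
      have h2 : pdx (pdx (pdx w)) x t = pdx (pdx (pdx (pdx u))) x t
          + 4 * (ip (pdxV (pdxV U)) (pdxV U) x t + ip (pdxV U) (pdxV (pdxV U)) x t)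
          + 4 * (ip (pdxV U) (pdxV (pdxV U)) x t + ip U (pdxV (pdxV (pdxV U))) x t) := by
        show deriv (fun y => pdx (pdx w) y t) x = _
        rw [hfun]
        exact h.deriv
      rw [h2, ip_comm (pdxV (pdxV U)) (pdxV U)]; ring
    -- time derivative of w
    have hd : pdt w x t = pdt (pdx u) x t
        + 2 * (ip (pdtV U) U x t + ip U (pdtV U) x t) := by
      have hfun : (fun s => w x s) = fun s => pdx u x s + 2 * ip U U x s :=
        funext fun s => hw x s
      have h := (hdt hu1 x t).add ((hasDerivAt_ip_t hU hU x t).const_mul 2)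
      show deriv (fun s => w x s) t = _
      rw [hfun]
      exact h.deriv
    have he : pdt (pdx u) x t = pdx (pdt u) x t := pdt_pdx_comm hu x t
    -- x-derivative of the right-hand side of the u-equation
    have hf_ : pdx (pdt u) x t = pdx (pdx (pdx (pdx u))) x t
        + 2 * pdx u x t * pdx (pdx u) x t
        + 12 * ip (pdxV U) (pdxV (pdxV U)) x t
        - 12 * ip U (pdxV (pdxV (pdxV U))) x t
        - 16 * ip U U x t * ip U (pdxV U) x t := by
      have hfun : (fun y => pdt u y t) = fun y => pdx (pdx (pdx u)) y t + (pdx u y t) ^ 2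
          - 12 * ip U (pdxV (pdxV U)) y t + 12 * ip (pdxV U) (pdxV U) y t
          - 4 * (ip U U y t) ^ 2 :=
        funext fun y => heq1 y t
      have h := ((((hdx hu3 x t).add ((hdx hu1 x t).pow 2)).sub
        ((hasDerivAt_ip_x hU hV2 x t).const_mul 12)).add
        ((hasDerivAt_ip_x hV1 hV1 x t).const_mul 12)).sub
        (((hasDerivAt_ip_x hU hU x t).pow 2).const_mul 4)
      have h2 : deriv (fun y => pdx (pdx (pdx u)) y t + (pdx u y t) ^ 2
          - 12 * ip U (pdxV (pdxV U)) y t + 12 * ip (pdxV U) (pdxV U) y t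
          - 4 * (ip U U y t) ^ 2) x = _ := h.deriv
      show deriv (fun y => pdt u y t) x = _
      rw [hfun, h2, ip_comm (pdxV (pdxV U)) (pdxV U), ip_comm (pdxV U) U]
      push_cast
      ring
    -- expand ⟨U, U_t⟩ using the second equation
    have hg : ip U (pdtV U) x t = 4 * ip U (pdxV (pdxV (pdxV U))) x t
        + pdx (pdx u) x t * ip U U x t + 2 * pdx u x t * ip U (pdxV U) x t
        + 4 * ip U U x t * ip U (pdxV U) x t + 4 * ip U (pdxV U) x t * ip U U x t := by
      have hterm : ∀ i : Fin N, U x t i * pdtV U x t i =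
          4 * (U x t i * pdxV (pdxV (pdxV U)) x t i)
          + pdx (pdx u) x t * (U x t i * U x t i)
          + 2 * pdx u x t * (U x t i * pdxV U x t i)
          + 4 * ip U U x t * (U x t i * pdxV U x t i)
          + 4 * ip U (pdxV U) x t * (U x t i * U x t i) := fun i => by
        rw [heq2 x t i]; ring
      have h2 : (∑ i, U x t i * pdtV U x t i)
          = ∑ i, (4 * (U x t i * pdxV (pdxV (pdxV U)) x t i)
          + pdx (pdx u) x t * (U x t i * U x t i)
          + 2 * pdx u x t * (U x t i * pdxV U x t i)
          + 4 * ip U U x t * (U x t i * pdxV U x t i)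
          + 4 * ip U (pdxV U) x t * (U x t i * U x t i)) :=
        Finset.sum_congr rfl fun i _ => hterm i
      show (∑ i, U x t i * pdtV U x t i) = _
      rw [h2]
      simp only [Finset.sum_add_distrib, ← Finset.mul_sum]
      show _ = 4 * (∑ i, U x t i * pdxV (pdxV (pdxV U)) x t i)
          + pdx (pdx u) x t * (∑ i, U x t i * U x t i)
          + 2 * pdx u x t * (∑ i, U x t i * pdxV U x t i)
          + 4 * (∑ i, U x t i * U x t i) * (∑ i, U x t i * pdxV U x t i)
          + 4 * (∑ i, U x t i * pdxV U x t i) * (∑ i, U x t i * U x t i)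
      simp only [ip]

    have hg' : ip (pdtV U) U x t = ip U (pdtV U) x t :=
      congrFun (congrFun (ip_comm (pdtV U) U) x) t
    rw [hd, he, hf_, hg', hg, hc, ha x t, hw x t]
    ring
  · intro x t i
    rw [heq2 x t i, ha x t, hw x t]
    ring
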